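/- Let W be a finite Coxeter group, J an irreducible subset of S, and t a reflection of W_J with full support J. Then the set {x ∈ N_W(W_J) : J(x t x^{-1}) = J} equals the product set X(S,J)·W_J(t), where X(S,J) = {x ∈ X_J : J^x = J} is the set of minimal double coset representatives normalizing J and W_J(t) = {x ∈ W_J : J(x t x^{-1}) = J}. -/

import Mathlib

open CoxeterSystem Pointwise

variable {B W : Type*} [Group W] {M : CoxeterMatrix B}

/-- The support of `w`: the set of indices of simple reflections appearing in some reduced
expression of `w`. -/
def CoxeterSystem.support (cs : CoxeterSystem M W) (w : W) : Set B :=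
  {i | ∃ ω : List B, cs.IsReduced ω ∧ cs.wordProd ω = w ∧ i ∈ ω}

/-- Irreducibility of the standard parabolic subgroup `W_J`, expressed via the Coxeter matrix. -/
def CoxeterMatrix.IsIrreducibleOn (M : CoxeterMatrix B) (J : Set B) : Prop :=
  J.Nonempty ∧ ¬ ∃ S₁ S₂ : Set B, S₁.Nonempty ∧ S₂.Nonempty ∧ Disjoint S₁ S₂ ∧
    S₁ ∪ S₂ = J ∧ ∀ i ∈ S₁, ∀ j ∈ S₂, M i j = 2

/-- The standard parabolic subgroup `W_J`. -/
def CoxeterSystem.parabolic (cs : CoxeterSystem M W) (J : Set B) : Subgroup W :=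
  Subgroup.closure (cs.simple '' J)

/-- `X_J`: the set of minimal length coset representatives of `W_J \ W`. -/
def CoxeterSystem.minReps (cs : CoxeterSystem M W) (J : Set B) : Set W :=
  {x : W | ∀ y ∈ cs.parabolic J, cs.length x ≤ cs.length (y * x)}

/-- `X(S,J) = {x ∈ X_J ∩ X_J⁻¹ | J^x = J}`: the minimal double coset representatives
normalizing `J`. -/
def CoxeterSystem.XSJ (cs : CoxeterSystem M W) (J : Set B) : Set W :=
  {x ∈ cs.minReps J | x⁻¹ ∈ cs.minReps J ∧
    (fun s => x⁻¹ * s * x) '' (cs.simple '' J) = cs.simple '' J}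

/-!
Write `x ∈ N_W(W_J)` as `x = u z` with `u ∈ W_J` and `z` of minimal length in `W_J x`. Then `z`
normalizes `W_J`, so `z⁻¹` is minimal in its coset as well, and the additivity
`ℓ (v z⁻¹) = ℓ v + ℓ z⁻¹` for `v ∈ W_J` forces `z⁻¹ s z` to have length one for every `s ∈ S_J`:
`z` permutes `S_J`, i.e. `z ∈ X(S,J)`, and `x = z (z⁻¹ u z)`. Conversely, conjugation by an element
permuting `S_J` maps reduced `J`-words letter by letter to reduced `J`-words, hence preserves the
property `J(w) = J`; this transports the condition on `x t x⁻¹` to `(z⁻¹ u z) t (z⁻¹ u z)⁻¹` and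
back. Length additivity, and the fact that reduced words of elements of `W_J` only involve
simple reflections of `J`, come from the exchange condition, which is proved with Tits' sign
representation of `W` on `W × {±1}`.
-/

theorem image_conj_eq_iff_mem_normalizer {G : Type*} [Group G] {S : Set G} {x : G} :
    (fun s => x⁻¹ * s * x) '' S = S ↔ x ∈ Subgroup.normalizer S := by
  have hconj : ⇑(MulAut.conj x⁻¹) = fun s => x⁻¹ * s * x :=
    funext fun s => by rw [MulAut.conj_apply, inv_inv]
  rw [← inv_mem_iff, Subgroup.mem_normalizer_iff_conj_image_eq, hconj]

namespace CoxeterSystem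

variable (cs : CoxeterSystem M W)

local prefix:100 "s" => cs.simple
local prefix:100 "π" => cs.wordProd
local prefix:100 "ℓ" => cs.length
local prefix:100 "lis " => cs.leftInvSeq

section SignRepresentation

variable [DecidableEq W]

/-- Tits' sign representation. That it is well defined on `W` is what makes the parity of the
number of occurrences of `t` in a left inversion sequence depend only on the product of the word
(`neg_one_pow_count_leftInvSeq_eq`). -/
def signFlip (i : B) : Equiv.Perm (W × ℤˣ) :=
  Function.Involutive.toPerm (fun p => (s i * p.1 * s i, if p.1 = s i then -p.2 else p.2)) <| by
    rintro ⟨t, ε⟩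
    by_cases ht : t = s i <;> simp [ht, mul_assoc, mul_eq_one_iff_eq_inv]

theorem signFlip_apply (i : B) (t : W) (ε : ℤˣ) :
    cs.signFlip i (t, ε) = (s i * t * s i, if t = s i then -ε else ε) := rfl

theorem prod_map_signFlip_apply (ω : List B) (t : W) (ε : ℤˣ) :
    (ω.map cs.signFlip).prod (t, ε) =
      (π ω * t * (π ω)⁻¹, (-1) ^ (lis ω).count (π ω * t * (π ω)⁻¹) * ε) := by
  induction ω with
  | nil => simp
  | cons i ω ih =>
    rw [List.map_cons, List.prod_cons, Equiv.Perm.mul_apply, ih, signFlip_apply]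
    set t' := π ω * t * (π ω)⁻¹
    have hconj : π (i :: ω) * t * (π (i :: ω))⁻¹ = MulAut.conj (s i) t' := by
      simp only [t', wordProd_cons, mul_inv_rev, inv_simple, MulAut.conj_apply]; group
    have hcount : (lis (i :: ω)).count (MulAut.conj (s i) t') =
        (lis ω).count t' + if t' = s i then 1 else 0 := by
      rw [leftInvSeq, List.count_cons, List.count_map_of_injective _ _ (MulAut.conj _).injective]
      congr 1
      simp only [beq_iff_eq, MulAut.conj_apply, inv_simple]
      refine if_congr ⟨fun h => ?_, fun h => by rw [h]; simp⟩ rfl rfl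
      simpa [mul_assoc] using congrArg (fun x => s i * x * s i) h.symm
    rw [hconj, hcount, MulAut.conj_apply, inv_simple]
    split_ifs <;> simp [pow_succ]

theorem prod_map_alternatingWord_two_mul {G : Type*} [Monoid G] (f : B → G) (i j : B) (m : ℕ) :
    ((alternatingWord i j (2 * m)).map f).prod = (f i * f j) ^ m := by
  induction m with
  | zero => simp [alternatingWord]
  | succ m ih =>
    rw [show 2 * (m + 1) = 2 * m + 1 + 1 by ring, alternatingWord_succ', alternatingWord_succ']
    simp [ih, pow_succ', mul_assoc]

theorem even_count_leftInvSeq_alternatingWord (i j : B) (t : W) :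
    Even ((lis (alternatingWord i j (2 * M i j))).count t) := by
  set m := M i j
  set l := lis (alternatingWord i j (2 * m))
  have hlen : l.length = 2 * m := by simp [l]
  have hperiod : l.drop m = l.take m := by
    refine List.ext_getElem (by simp [hlen]; lia) fun k h₁ h₂ => ?_
    simp only [List.length_drop, List.length_take, hlen] at h₁ h₂
    simp only [List.getElem_drop, List.getElem_take, l]
    rw [getElem_leftInvSeq_alternatingWord cs i j m (m + k) (by lia),
      getElem_leftInvSeq_alternatingWord cs i j m k (by lia), prod_alternatingWord_eq_mul_pow,
      prod_alternatingWord_eq_mul_pow,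
      show (2 * (m + k) + 1) / 2 = k + m by lia, show (2 * k + 1) / 2 = k by lia, pow_add,
      simple_mul_simple_pow', mul_one]
    simp
  rw [← List.take_append_drop m l, List.count_append, hperiod]
  exact ⟨_, rfl⟩

theorem isLiftable_signFlip : M.IsLiftable cs.signFlip := by
  intro i j
  rw [← prod_map_alternatingWord_two_mul]
  ext1 ⟨t, ε⟩
  have hw : π (alternatingWord i j (2 * M i j)) = 1 := by
    rw [prod_alternatingWord_eq_mul_pow]; simp
  rw [prod_map_signFlip_apply, hw, (even_count_leftInvSeq_alternatingWord cs i j _).neg_one_pow]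
  simp

noncomputable def signRep : W →* Equiv.Perm (W × ℤˣ) :=
  cs.lift ⟨cs.signFlip, cs.isLiftable_signFlip⟩

theorem neg_one_pow_count_leftInvSeq_eq {ω ω' : List B} (h : π ω = π ω') (t : W) :
    (-1 : ℤˣ) ^ (lis ω).count t = (-1) ^ (lis ω').count t := by
  have key : ∀ ω : List B,
      cs.signRep (π ω) ((π ω)⁻¹ * t * π ω, 1) = (t, (-1) ^ (lis ω).count t) := by
    intro ω
    have hrep : cs.signRep (π ω) = (ω.map cs.signFlip).prod := by
      simp [signRep, wordProd, map_list_prod, Function.comp_def]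
    rw [hrep, prod_map_signFlip_apply]
    simp [mul_assoc]
  exact congrArg Prod.snd ((key ω).symm.trans (h ▸ key ω'))

end SignRepresentation

theorem simple_mem_leftInvSeq_of_isLeftDescent {ω : List B} {i : B}
    (hi : cs.IsLeftDescent (π ω) i) : s i ∈ lis ω := by
  classical
  obtain ⟨α, hα, hαω⟩ := cs.exists_isReduced (s i * π ω)
  have hnotin : s i ∉ lis α := fun h => by
    have := (cs.isLeftInversion_of_mem_leftInvSeq hα h).2
    rw [← hαω, simple_mul_simple_cancel_left] at this
    exact (lt_asymm hi) this
  have hcount : (lis (i :: α)).count (s i) = 1 := by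
    have hfix : MulAut.conj (s i) (s i) = s i := by simp
    rw [leftInvSeq, List.count_cons]
    nth_rw 1 [← hfix]
    rw [List.count_map_of_injective _ _ (MulAut.conj _).injective, List.count_eq_zero.mpr hnotin]
    simp
  have hprod : π ω = π (i :: α) := by rw [wordProd_cons, ← hαω, simple_mul_simple_cancel_left]
  have hsign := cs.neg_one_pow_count_leftInvSeq_eq hprod (s i)
  rw [hcount, pow_one] at hsign
  refine List.count_pos_iff.mp (Nat.pos_of_ne_zero fun h0 => ?_)
  rw [h0, pow_zero] at hsign
  exact absurd hsign (by decide)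

theorem exists_eraseIdx_of_isLeftDescent {ω : List B} {i : B}
    (hi : cs.IsLeftDescent (π ω) i) : ∃ k < ω.length, s i * π ω = π (ω.eraseIdx k) := by
  obtain ⟨k, hk, hki⟩ := List.mem_iff_getElem.mp (cs.simple_mem_leftInvSeq_of_isLeftDescent hi)
  refine ⟨k, by simpa using hk, ?_⟩
  rw [← getD_leftInvSeq_mul_wordProd, List.getD_eq_getElem _ _ hk, hki]

theorem isReduced_cons_of_not_isLeftDescent {ω : List B} (hω : cs.IsReduced ω) {i : B}
    (hi : ¬cs.IsLeftDescent (π ω) i) : cs.IsReduced (i :: ω) := by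
  have := cs.length_simple_mul (π ω) i
  simp only [IsLeftDescent, not_lt] at hi
  rw [IsReduced, wordProd_cons, List.length_cons, ← hω.eq]
  lia

theorem exists_isReduced_sublist (ω : List B) :
    ∃ ω' : List B, ω'.Sublist ω ∧ cs.IsReduced ω' ∧ π ω' = π ω := by
  induction ω with
  | nil => exact ⟨[], .slnil, by simp [IsReduced], rfl⟩
  | cons i α ih =>
    obtain ⟨α', hsub, hred, hprod⟩ := ih
    by_cases hi : cs.IsLeftDescent (π α') i
    · obtain ⟨k, hk, hki⟩ := cs.exists_eraseIdx_of_isLeftDescent hi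
      refine ⟨α'.eraseIdx k, (List.eraseIdx_sublist _ _).trans (hsub.trans (.cons i (.refl α))),
        ?_, by rw [← hki, hprod, wordProd_cons]⟩
      have := cs.length_simple_mul (π α') i
      have := List.length_eraseIdx_add_one hk
      have := hred.eq
      rw [IsReduced, ← hki]
      rw [IsLeftDescent] at hi
      lia
    · exact ⟨i :: α', hsub.cons_cons i, cs.isReduced_cons_of_not_isLeftDescent hred hi,
        by rw [wordProd_cons, wordProd_cons, hprod]⟩

variable {J : Set B}

theorem mem_parabolic_iff {w : W} :
    w ∈ cs.parabolic J ↔ ∃ ω : List B, (∀ i ∈ ω, i ∈ J) ∧ π ω = w := by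
  constructor
  · intro hw
    induction hw using Subgroup.closure_induction with
    | mem x hx =>
      obtain ⟨i, hi, rfl⟩ := hx
      exact ⟨[i], by simpa using hi, by simp⟩
    | one => exact ⟨[], by simp, by simp⟩
    | mul x y _ _ hx hy =>
      obtain ⟨ω₁, h₁, rfl⟩ := hx
      obtain ⟨ω₂, h₂, rfl⟩ := hy
      exact ⟨ω₁ ++ ω₂, by simpa [or_imp, forall_and] using ⟨h₁, h₂⟩,
        wordProd_append _ _ _⟩
    | inv x _ hx =>
      obtain ⟨ω, hω, rfl⟩ := hx
      exact ⟨ω.reverse, by simpa using hω, wordProd_reverse _ _⟩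
  · rintro ⟨ω, hω, rfl⟩
    refine list_prod_mem fun x hx => ?_
    obtain ⟨i, hi, rfl⟩ := List.mem_map.mp hx
    exact Subgroup.subset_closure ⟨i, hω i hi, rfl⟩

theorem exists_isReduced_of_mem_parabolic {w : W} (hw : w ∈ cs.parabolic J) :
    ∃ ω : List B, cs.IsReduced ω ∧ (∀ i ∈ ω, i ∈ J) ∧ π ω = w := by
  obtain ⟨ω, hωJ, rfl⟩ := cs.mem_parabolic_iff.mp hw
  obtain ⟨ω', hsub, hred, hprod⟩ := cs.exists_isReduced_sublist ω
  exact ⟨ω', hred, fun i hi => hωJ i (hsub.subset hi), hprod⟩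

theorem simple_mem_parabolic_of_isLeftDescent {w : W} (hw : w ∈ cs.parabolic J) {i : B}
    (hi : cs.IsLeftDescent w i) : s i ∈ cs.parabolic J := by
  obtain ⟨κ, -, hκJ, rfl⟩ := cs.exists_isReduced_of_mem_parabolic hw
  obtain ⟨k, -, hk⟩ := cs.exists_eraseIdx_of_isLeftDescent hi
  have : π (κ.eraseIdx k) ∈ cs.parabolic J :=
    cs.mem_parabolic_iff.mpr ⟨_, fun j hj => hκJ j ((List.eraseIdx_sublist κ k).subset hj),
      rfl⟩
  simpa [← hk] using mul_mem this (inv_mem hw)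

theorem simple_mem_parabolic_of_mem_of_isReduced {ω : List B} (hω : cs.IsReduced ω)
    (hωJ : π ω ∈ cs.parabolic J) {i : B} (hi : i ∈ ω) : s i ∈ cs.parabolic J := by
  induction ω with
  | nil => simp at hi
  | cons c α ih =>
    have hα : cs.IsReduced α := by simpa using hω.drop 1
    have hc : cs.IsLeftDescent (π (c :: α)) c := by
      rw [IsLeftDescent, hω.eq, wordProd_cons, simple_mul_simple_cancel_left, hα.eq]
      simp
    have hcJ := cs.simple_mem_parabolic_of_isLeftDescent hωJ hc
    rcases List.mem_cons.mp hi with rfl | hi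
    · exact hcJ
    · refine ih hα ?_ hi
      simpa [wordProd_cons] using mul_mem hcJ hωJ

theorem simple_mem_image_of_mem_parabolic {i : B} (hi : s i ∈ cs.parabolic J) :
    s i ∈ cs.simple '' J := by
  obtain ⟨κ, hκ, hκJ, hκi⟩ := cs.exists_isReduced_of_mem_parabolic hi
  obtain ⟨j, rfl⟩ : ∃ j, κ = [j] := List.length_eq_one_iff.mp (by
    rw [← hκ.eq, hκi, length_simple])
  exact ⟨j, hκJ j (by simp), by simpa using hκi⟩

theorem simple_mem_image_of_mem_support {w : W} (hw : w ∈ cs.parabolic J) {i : B}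
    (hi : i ∈ cs.support w) : s i ∈ cs.simple '' J := by
  obtain ⟨ω, hω, rfl, hiω⟩ := hi
  exact cs.simple_mem_image_of_mem_parabolic
    (cs.simple_mem_parabolic_of_mem_of_isReduced hω hw hiω)

theorem mem_parabolic_of_support_subset {w : W} (hw : cs.support w ⊆ J) :
    w ∈ cs.parabolic J := by
  obtain ⟨ω, hω, rfl⟩ := cs.exists_isReduced w
  exact cs.mem_parabolic_iff.mpr ⟨ω, fun i hi => hw ⟨ω, hω, rfl, hi⟩, rfl⟩

theorem mem_support_of_simple_eq {w : W} {i j : B} (hij : s i = s j) (hj : j ∈ cs.support w) :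
    i ∈ cs.support w := by
  classical
  obtain ⟨ω, hω, rfl, hjω⟩ := hj
  have hprod : π (ω.map (Function.update id j i)) = π ω := by
    simp only [wordProd, List.map_map]
    congr 1
    refine List.map_congr_left fun b _ => ?_
    by_cases hb : b = j <;> simp [hb, hij]
  refine ⟨ω.map (Function.update id j i), ?_, hprod, List.mem_map.mpr ⟨j, hjω, by simp⟩⟩
  rw [IsReduced, hprod, List.length_map]
  exact hω

theorem exists_mul_mem_minReps (J : Set B) (x : W) :
    ∃ u ∈ cs.parabolic J, ∃ z ∈ cs.minReps J, x = u * z := by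
  classical
  have hex : ∃ n, ∃ u ∈ cs.parabolic J, ℓ (u * x) = n := ⟨_, 1, one_mem _, rfl⟩
  obtain ⟨u, hu, hux⟩ := Nat.find_spec hex
  refine ⟨u⁻¹, inv_mem hu, u * x, fun y hy => ?_, by group⟩
  rw [hux, ← mul_assoc]
  exact Nat.find_min' hex ⟨y * u, mul_mem hy hu, rfl⟩

theorem isReduced_append_of_mem_minReps {κ ζ : List B} (hκ : cs.IsReduced κ)
    (hκJ : ∀ i ∈ κ, i ∈ J) (hζ : cs.IsReduced ζ) (hz : π ζ ∈ cs.minReps J) :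
    cs.IsReduced (κ ++ ζ) := by
  induction κ with
  | nil => simpa using hζ
  | cons c κ ih =>
    have hκ' : cs.IsReduced κ := by simpa using hκ.drop 1
    have hκ'J : π κ ∈ cs.parabolic J :=
      cs.mem_parabolic_iff.mpr ⟨κ, fun i hi => hκJ i (.tail c hi), rfl⟩
    refine cs.isReduced_cons_of_not_isLeftDescent (ih hκ' fun i hi => hκJ i (.tail c hi))
      fun hc => ?_
    obtain ⟨k, hk, hck⟩ := cs.exists_eraseIdx_of_isLeftDescent hc
    rw [List.length_append] at hk
    by_cases hkκ : k < κ.length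
    · -- deleting a letter of `κ` would shorten the reduced word `c :: κ`
      rw [List.eraseIdx_append_of_lt_length hkκ, wordProd_append, wordProd_append, ← mul_assoc]
        at hck
      have h₁ := cs.length_wordProd_le (κ.eraseIdx k)
      have h₂ := List.length_eraseIdx_add_one hkκ
      have h₃ := hκ.eq
      rw [wordProd_cons, mul_right_cancel hck, List.length_cons] at h₃
      lia
    · -- deleting a letter of `ζ` would shorten `π ζ` within its coset `W_J π ζ`
      push Not at hkκ
      rw [List.eraseIdx_append_of_length_le hkκ, wordProd_append, wordProd_append, ← mul_assoc]
        at hck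
      have hy : (π κ)⁻¹ * s c * π κ ∈ cs.parabolic J := mul_mem (mul_mem (inv_mem hκ'J)
        (Subgroup.subset_closure ⟨c, hκJ c (.head κ), rfl⟩)) hκ'J
      have h₁ := hz _ hy
      rw [show (π κ)⁻¹ * s c * π κ * π ζ = (π κ)⁻¹ * (s c * π κ * π ζ) by group,
        hck, inv_mul_cancel_left] at h₁
      have h₂ := cs.length_wordProd_le (ζ.eraseIdx (k - κ.length))
      have h₃ := List.length_eraseIdx_add_one (l := ζ) (i := k - κ.length) (by lia)
      have h₄ := hζ.eq
      lia

theorem length_mul_of_mem_minReps {u z : W} (hu : u ∈ cs.parabolic J)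
    (hz : z ∈ cs.minReps J) : ℓ (u * z) = ℓ u + ℓ z := by
  obtain ⟨κ, hκ, hκJ, rfl⟩ := cs.exists_isReduced_of_mem_parabolic hu
  obtain ⟨ζ, hζ, rfl⟩ := cs.exists_isReduced z
  rw [← wordProd_append, cs.isReduced_append_of_mem_minReps hκ hκJ hζ hz, hκ.eq, hζ.eq,
    List.length_append]

theorem inv_mem_minReps_of_mem_normalizer {z : W} (hz : z ∈ cs.minReps J)
    (hN : z ∈ Subgroup.normalizer (cs.parabolic J : Set W)) : z⁻¹ ∈ cs.minReps J := by
  intro y hy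
  calc ℓ z⁻¹ = ℓ z := cs.length_inv z
    _ ≤ ℓ ((z * y⁻¹ * z⁻¹) * z) :=
        hz _ ((Subgroup.mem_normalizer_iff.mp hN _).mp (inv_mem hy))
    _ = ℓ (y * z⁻¹) := by rw [← cs.length_inv]; group

theorem conj_simple_mem_image {z : W} (hz' : z⁻¹ ∈ cs.minReps J)
    (hN : z ∈ Subgroup.normalizer (cs.parabolic J : Set W)) {j : B} (hj : j ∈ J) :
    z⁻¹ * s j * z ∈ cs.simple '' J := by
  set v := z⁻¹ * s j * z
  have hv : v ∈ cs.parabolic J :=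
    (Subgroup.mem_normalizer_iff''.mp hN _).mp (Subgroup.subset_closure ⟨j, hj, rfl⟩)
  have hadd : ℓ (s j * z) = ℓ v + ℓ z := by
    rw [← cs.length_inv, show (s j * z)⁻¹ = v⁻¹ * z⁻¹ by simp [v, mul_assoc],
      cs.length_mul_of_mem_minReps (inv_mem hv) hz', cs.length_inv, cs.length_inv]
  have hv0 : ℓ v ≠ 0 := fun h => by
    have := cs.length_simple j
    rw [show s j = z * v * z⁻¹ by simp [v, mul_assoc], cs.length_eq_zero_iff.mp h] at this
    simp at this
  obtain ⟨i, hi⟩ := (cs.length_eq_one_iff (w := v)).mp (by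
    have := cs.length_simple_mul z j
    lia)
  rw [hi] at hv ⊢
  exact cs.simple_mem_image_of_mem_parabolic hv

theorem mem_normalizer_simple_of_mem_minReps {z : W} (hz : z ∈ cs.minReps J)
    (hz' : z⁻¹ ∈ cs.minReps J) (hN : z ∈ Subgroup.normalizer (cs.parabolic J : Set W)) :
    z ∈ Subgroup.normalizer (cs.simple '' J) := by
  refine Subgroup.mem_set_normalizer_iff''.mpr fun h => ⟨?_, fun hh => ?_⟩
  · rintro ⟨j, hj, rfl⟩
    exact cs.conj_simple_mem_image hz' hN hj
  · obtain ⟨j, hj, hjh⟩ := hh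
    have := cs.conj_simple_mem_image (by rwa [inv_inv]) (inv_mem hN) hj
    rwa [hjh, inv_inv, ← mul_assoc, ← mul_assoc, mul_inv_cancel, one_mul, mul_assoc,
      mul_inv_cancel, mul_one] at this

variable {g : W}

theorem wordProd_map_of_simple_conj {σ : B → B} {ω : List B}
    (hσ : ∀ b ∈ ω, s (σ b) = g * s b * g⁻¹) : π (ω.map σ) = g * π ω * g⁻¹ := by
  rw [wordProd, wordProd, ← MulAut.conj_apply, map_list_prod, List.map_map, List.map_map]
  exact congrArg List.prod (List.map_congr_left hσ)

theorem conj_mem_parabolic (hg : g ∈ Subgroup.normalizer (cs.simple '' J)) {w : W}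
    (hw : w ∈ cs.parabolic J) : g * w * g⁻¹ ∈ cs.parabolic J :=
  (Subgroup.mem_normalizer_iff.mp (Subgroup.normalizer_le_normalizer_closure _ hg) w).mp hw

theorem exists_simple_conj (hg : g ∈ Subgroup.normalizer (cs.simple '' J)) :
    ∃ σ : B → B, ∀ b ∈ J, σ b ∈ J ∧ s (σ b) = g * s b * g⁻¹ := by
  have : ∀ b, ∃ c, b ∈ J → c ∈ J ∧ s c = g * s b * g⁻¹ := fun b => by
    by_cases hb : b ∈ J
    · obtain ⟨c, hc, hcb⟩ := (Subgroup.mem_set_normalizer_iff.mp hg _).mp ⟨b, hb, rfl⟩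
      exact ⟨c, fun _ => ⟨hc, hcb⟩⟩
    · exact ⟨b, fun h => absurd h hb⟩
  choose σ hσ using this
  exact ⟨σ, hσ⟩

theorem length_conj_le (hg : g ∈ Subgroup.normalizer (cs.simple '' J)) {w : W}
    (hw : w ∈ cs.parabolic J) : ℓ (g * w * g⁻¹) ≤ ℓ w := by
  obtain ⟨σ, hσ⟩ := cs.exists_simple_conj hg
  obtain ⟨κ, hκ, hκJ, rfl⟩ := cs.exists_isReduced_of_mem_parabolic hw
  rw [← cs.wordProd_map_of_simple_conj fun b hb => (hσ b (hκJ b hb)).2, hκ.eq]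
  exact (cs.length_wordProd_le _).trans (List.length_map σ).le

theorem length_conj_eq (hg : g ∈ Subgroup.normalizer (cs.simple '' J)) {w : W}
    (hw : w ∈ cs.parabolic J) : ℓ (g * w * g⁻¹) = ℓ w := by
  refine (cs.length_conj_le hg hw).antisymm ?_
  simpa [mul_assoc] using cs.length_conj_le (inv_mem hg) (cs.conj_mem_parabolic hg hw)

theorem support_conj (hg : g ∈ Subgroup.normalizer (cs.simple '' J)) {w : W}
    (hw : cs.support w = J) : cs.support (g * w * g⁻¹) = J := by
  have hwJ : w ∈ cs.parabolic J := cs.mem_parabolic_of_support_subset hw.subset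
  refine Set.Subset.antisymm (fun i hi => ?_) fun j hj => ?_
  · obtain ⟨j, hj, hji⟩ :=
      cs.simple_mem_image_of_mem_support (cs.conj_mem_parabolic hg hwJ) hi
    rw [← hw] at hj ⊢
    exact cs.mem_support_of_simple_eq hji.symm hj
  · obtain ⟨σ, hσ⟩ := cs.exists_simple_conj hg
    obtain ⟨c, hc, hcj⟩ := (Subgroup.mem_set_normalizer_iff''.mp hg _).mp ⟨j, hj, rfl⟩
    obtain ⟨ω, hω, rfl, hcω⟩ : c ∈ cs.support w := hw ▸ hc
    have hωJ : ∀ b ∈ ω, b ∈ J := fun b hb => hw ▸ ⟨ω, hω, rfl, hb⟩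
    have hprod := cs.wordProd_map_of_simple_conj fun b hb => (hσ b (hωJ b hb)).2
    refine cs.mem_support_of_simple_eq ?_ ⟨ω.map σ, ?_, hprod, List.mem_map_of_mem hcω⟩
    · rw [(hσ c hc).2, hcj]; group
    · rw [IsReduced, hprod, cs.length_conj_eq hg hwJ, List.length_map, hω.eq]

end CoxeterSystem

theorem statement9_general (cs : CoxeterSystem M W) (J : Set B) (t : W) :
    {x : W | x ∈ Subgroup.normalizer (cs.parabolic J : Set W) ∧ cs.support (x * t * x⁻¹) = J}
      = cs.XSJ J * {x : W | x ∈ cs.parabolic J ∧ cs.support (x * t * x⁻¹) = J} := by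
  ext x
  constructor
  · rintro ⟨hxN, hxt⟩
    obtain ⟨u, hu, z, hz, rfl⟩ := cs.exists_mul_mem_minReps J x
    have hzN : z ∈ Subgroup.normalizer (cs.parabolic J : Set W) := by
      simpa using mul_mem (inv_mem (Subgroup.le_normalizer hu)) hxN
    have hz' := cs.inv_mem_minReps_of_mem_normalizer hz hzN
    have hzS := cs.mem_normalizer_simple_of_mem_minReps hz hz' hzN
    refine ⟨z, ⟨hz, hz', image_conj_eq_iff_mem_normalizer.mpr hzS⟩, z⁻¹ * u * z,
      ⟨(Subgroup.mem_normalizer_iff''.mp hzN u).mp hu, ?_⟩, by group⟩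
    rw [show z⁻¹ * u * z * t * (z⁻¹ * u * z)⁻¹ = z⁻¹ * (u * z * t * (u * z)⁻¹) * z⁻¹⁻¹ by group]
    exact cs.support_conj (inv_mem hzS) hxt
  · rintro ⟨z, ⟨-, -, hzS⟩, v, ⟨hv, hvt⟩, rfl⟩
    rw [image_conj_eq_iff_mem_normalizer] at hzS
    have hzN := Subgroup.normalizer_le_normalizer_closure _ hzS
    refine ⟨mul_mem hzN (Subgroup.le_normalizer hv), ?_⟩
    rw [show z * v * t * (z * v)⁻¹ = z * (v * t * v⁻¹) * z⁻¹ by group]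
    exact cs.support_conj hzS hvt

/-- Let `J` be an irreducible subset of `S` and `t` a reflection of `W_J` with full support `J`.
Then `{x ∈ N_W(W_J) | J(x t x⁻¹) = J} = X(S,J) · W_J(t)`, where
`W_J(t) = {x ∈ W_J | J(x t x⁻¹) = J}`. -/
theorem statement9 (cs : CoxeterSystem M W) [Finite W] (J : Set B)
    (hJ : M.IsIrreducibleOn J) (t : W) (ht : cs.IsReflection t)
    (htJ : t ∈ cs.parabolic J) (hsupp : cs.support t = J) :
    {x : W | x ∈ Subgroup.normalizer (cs.parabolic J : Set W) ∧ cs.support (x * t * x⁻¹) = J}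
      = cs.XSJ J * {x : W | x ∈ cs.parabolic J ∧ cs.support (x * t * x⁻¹) = J} :=
  statement9_general cs J t
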